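/- arXiv:2205.15378 — 7 statements merged into one kernel-verified Lean document; each statement's English description precedes it below -/
import Mathlib

section
/- Let P be a finite poset containing k pairwise distinct up-single elements x_1, …, x_k. Then |End(P)| ≥ k · |Aut(P)|, i.e., the number of order-preserving maps P → P is at least k times the number of order-preserving bijections P → P. -/
/-!
Each pair `(x, φ)` of an up-single element `x` with unique cover `y` and an automorphism `φ`
gives the endomorphism `U_x ∘ φ`, where `U_x` moves `x` up to `y` and fixes everything else;
`U_x` is monotone because every element strictly above `x` lies above `y`. The pair is recovered
from `U_x ∘ φ`: its range is everything except `x`, and `φ` is determined because `φ⁻¹ x` and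
`φ⁻¹ y` cannot be swapped by another automorphism.
-/

open Function

section

variable {α : Type*}

/-- The inverse of a permutation of a finite set is one of its powers, so it is monotone. -/
theorem Monotone.le_of_map_le_of_bijective [Preorder α] [Finite α] {f : α → α}
    (hf : Monotone f) (hb : Bijective f) {a b : α} (h : f a ≤ f b) : a ≤ b := by
  set e := Equiv.ofBijective f hb
  obtain ⟨n, hn⟩ : e⁻¹ ∈ Submonoid.powers e :=
    mem_powers_iff_mem_zpowers.2 (inv_mem (Subgroup.mem_zpowers e))
  have hsymm : Monotone e.symm := by
    rw [← Equiv.Perm.inv_def, ← hn, Equiv.Perm.coe_pow]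
    exact hf.iterate n
  simpa [e] using hsymm h

theorem le_of_lt_of_forall_covBy_eq [PartialOrder α] [IsStronglyAtomic α] {x y b : α}
    (hy : ∀ c, x ⋖ c → c = y) (hb : x < b) : y ≤ b := by
  obtain ⟨c, hc, hcb⟩ := exists_covBy_le_of_lt hb
  exact hy c hc ▸ hcb

section UpdateId

variable [DecidableEq α] {x y : α}

theorem monotone_update_id [PartialOrder α] (hxy : x ≤ y) (hy : ∀ b, x < b → y ≤ b) :
    Monotone (update id x y) := by
  intro a b hab
  rcases eq_or_ne a x with rfl | hax
  · rcases eq_or_ne b a with rfl | hba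
    · exact le_rfl
    · simpa [update_of_ne hba] using hy b (lt_of_le_of_ne hab hba.symm)
  · rcases eq_or_ne b x with rfl | hbx
    · simpa [update_of_ne hax] using hab.trans hxy
    · simpa [update_of_ne hax, update_of_ne hbx] using hab

theorem range_update_id (hxy : x ≠ y) : Set.range (update id x y) = {x}ᶜ := by
  ext z
  refine ⟨?_, fun hz => ⟨z, by simp [update_of_ne hz]⟩⟩
  rintro ⟨w, rfl⟩
  rcases eq_or_ne w x with rfl | hwx
  · simp [hxy.symm]
  · simpa [update_of_ne hwx] using hwx

theorem apply_eq_of_update_id_comp_eq [PartialOrder α] [Finite α] (hxy : x < y)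
    {φ ψ : α → α} (hφ : Monotone φ) (hφb : Bijective φ) (hψ : Monotone ψ)
    (hψs : Surjective ψ) (h : update id x y ∘ φ = update id x y ∘ ψ) {z : α}
    (hz : φ z = x) : ψ z = x := by
  by_contra hψz
  have hψz' : ψ z = y := by simpa [hz, update_of_ne hψz] using (congrFun h z).symm
  obtain ⟨w, hw⟩ := hψs x
  have hwz : w ≠ z := fun hwz => hxy.ne (by rw [← hw, ← hψz', hwz])
  have hφw : φ w ≠ x := hz ▸ hφb.1.ne hwz
  have hφw' : φ w = y := by simpa [hw, update_of_ne hφw] using congrFun h w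
  have hzw : z ≤ w := hφ.le_of_map_le_of_bijective hφb (by rw [hz, hφw']; exact hxy.le)
  exact (hψ hzw).not_gt (hψz' ▸ hw ▸ hxy)

theorem eq_of_update_id_comp_eq [PartialOrder α] [Finite α] (hxy : x < y) {φ ψ : α → α}
    (hφ : Monotone φ) (hφb : Bijective φ) (hψ : Monotone ψ) (hψb : Bijective ψ)
    (h : update id x y ∘ φ = update id x y ∘ ψ) : φ = ψ := by
  funext z
  by_cases hz : φ z = x
  · rw [hz, apply_eq_of_update_id_comp_eq hxy hφ hφb hψ hψb.2 h hz]
  · have hψz : ψ z ≠ x := fun hψz =>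
      hz (apply_eq_of_update_id_comp_eq hxy hψ hψb hφ hφb.2 h.symm hψz)
    simpa [update_of_ne hz, update_of_ne hψz] using congrFun h z

end UpdateId

end

/-- If a finite poset `P` has `k` distinct up-single elements, then
`|End(P)| ≥ k · |Aut(P)|`. -/
theorem card_end_ge_upSingles_mul_card_aut
    (P : Type*) [PartialOrder P] [Fintype P] (k : ℕ) (s : Finset P)
    (hcard : s.card = k) (hup : ∀ x ∈ s, ∃! y : P, x ⋖ y) :
    k * Nat.card {f : P → P // Monotone f ∧ Function.Bijective f}
      ≤ Nat.card {f : P → P // Monotone f} := by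
  classical
  subst hcard
  choose! y hy hyu using hup
  have hmono : ∀ x ∈ s, Monotone (update id x (y x)) := fun x hx =>
    monotone_update_id (hy x hx).le fun _ => le_of_lt_of_forall_covBy_eq (hyu x hx)
  let F : s × {f : P → P // Monotone f ∧ Bijective f} → {f : P → P // Monotone f} :=
    fun p => ⟨update id p.1 (y p.1) ∘ p.2.1, (hmono _ p.1.2).comp p.2.2.1⟩
  have hF : Injective F := by
    rintro ⟨⟨x, hx⟩, φ, hφ, hφb⟩ ⟨⟨x', hx'⟩, ψ, hψ, hψb⟩ hFeq
    have h : update id x (y x) ∘ φ = update id x' (y x') ∘ ψ := congrArg Subtype.val hFeq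
    obtain rfl : x = x' := by
      have hrange := congrArg Set.range h
      rwa [hφb.2.range_comp, hψb.2.range_comp, range_update_id (hy x hx).ne,
        range_update_id (hy x' hx').ne, compl_inj_iff, Set.singleton_eq_singleton_iff] at hrange
    obtain rfl := eq_of_update_id_comp_eq (hy x hx).lt hφ hφb hψ hψb h
    rfl
  calc s.card * Nat.card {f : P → P // Monotone f ∧ Bijective f}
      = Nat.card (s × {f : P → P // Monotone f ∧ Bijective f}) := by
        rw [Nat.card_prod, Nat.card_eq_fintype_card (α := s), Fintype.card_coe]
    _ ≤ Nat.card {f : P → P // Monotone f} := Nat.card_le_card_of_injective F hF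
end

section
/- Let P be a finite poset and let a, b be distinct elements of P such that b is an older sibling of a: every element covered by a is also covered by b, and every element covering a also covers b, and a and b are incomparable. Then the map V_{a,b} defined by V_{a,b}(a) = b and V_{a,b}(z) = z for z ≠ a is an endomorphism of P. -/
/-!
Replacing `a` by `b` can only break monotonicity on a pair `x < a` or `a < y`. In a finite poset
such a chain passes through a lower cover of `a` (resp. an upper cover of `a`), and the sibling
hypotheses put that cover below (resp. above) `b`.
-/

section Covers

variable {P : Type*} [PartialOrder P] {a b : P}

theorem le_of_lt_of_le_upperCovers [IsStronglyAtomic P] {y : P}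
    (hup : ∀ z, a ⋖ z → b ≤ z) (hay : a < y) : b ≤ y := by
  obtain ⟨z, haz, hzy⟩ := hay.exists_covby_le
  exact (hup z haz).trans hzy

theorem le_of_lt_of_lowerCovers_le [IsStronglyCoatomic P] {x : P}
    (hdown : ∀ z, z ⋖ a → z ≤ b) (hxa : x < a) : x ≤ b := by
  obtain ⟨z, hxz, hza⟩ := hxa.exists_le_covby
  exact hxz.trans (hdown z hza)

theorem monotone_ite_eq_of_covBy [IsStronglyAtomic P] [IsStronglyCoatomic P] [DecidableEq P]
    (hdown : ∀ z, z ⋖ a → z ≤ b) (hup : ∀ z, a ⋖ z → b ≤ z) :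
    Monotone (fun z : P => if z = a then b else z) := by
  intro x y hxy
  by_cases hx : x = a <;> by_cases hy : y = a <;> simp only [hx, hy, if_true, if_false]
  · exact le_rfl
  · exact le_of_lt_of_le_upperCovers hup ((hx ▸ hxy).lt_of_ne (Ne.symm hy))
  · exact le_of_lt_of_lowerCovers_le hdown ((hy ▸ hxy).lt_of_ne hx)
  · exact hxy

end Covers

theorem olderSibling_contraction_monotone_general
    (P : Type*) [PartialOrder P] [Fintype P] [DecidableEq P] (a b : P)
    (hdown : ∀ z : P, z ⋖ a → z ⋖ b) (hup : ∀ z : P, a ⋖ z → b ⋖ z) :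
    Monotone (fun z : P => if z = a then b else z) :=
  monotone_ite_eq_of_covBy (fun z hz => (hdown z hz).le) (fun z hz => (hup z hz).le)

/-- If `b` is an older sibling of `a` (distinct, incomparable, `b` covers every
element that `a` covers and is covered by every element covering `a`), then the
map sending `a` to `b` and fixing everything else is an endomorphism. -/
theorem olderSibling_contraction_monotone
    (P : Type*) [PartialOrder P] [Fintype P] [DecidableEq P] (a b : P)
    (hne : a ≠ b) (hinc : ¬ a ≤ b ∧ ¬ b ≤ a)
    (hdown : ∀ z : P, z ⋖ a → z ⋖ b) (hup : ∀ z : P, a ⋖ z → b ⋖ z) :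
    Monotone (fun z : P => if z = a then b else z) :=
  olderSibling_contraction_monotone_general P a b hdown hup
end

section
/- Let P be a finite poset containing k distinct elements a_1, …, a_k such that each a_i has an older sibling b_i. Then |End(P)| ≥ (k/2) · |Aut(P)|. -/
/-!
If `b` is an older sibling of `a`, the map `σₐ` sending `a` to `b` and fixing everything else is
order preserving, and its image is everything except `a`. Hence `(a, g) ↦ σₐ ∘ g` sends pairs of
an element with an older sibling and an automorphism to endomorphisms. It is at most two-to-one:
`a` is recovered as the only element missed by `σₐ ∘ g`, and then `g` is determined up to
composition with the transposition of `a` and `b`.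
-/

open Finset Function

section Shift

variable {P : Type*} [DecidableEq P]

theorem monotone_update_id_of_covBy [PartialOrder P] [IsStronglyAtomic P] [IsStronglyCoatomic P]
    {a b : P} (hlow : ∀ z, z ⋖ a → z ⋖ b) (hup : ∀ z, a ⋖ z → b ⋖ z) :
    Monotone (update id a b) := by
  intro x y hxy
  rcases eq_or_ne x a with rfl | hx <;> rcases eq_or_ne y x with rfl | hy
  · exact le_rfl
  · obtain ⟨z, hxz, hzy⟩ := exists_covBy_le_of_lt (lt_of_le_of_ne hxy hy.symm)
    simpa [update_of_ne hy] using (hup z hxz).le.trans hzy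
  · exact le_rfl
  · rcases eq_or_ne y a with rfl | hya
    · obtain ⟨z, hxz, hzy⟩ := exists_le_covBy_of_lt (lt_of_le_of_ne hxy hx)
      simpa [update_of_ne hx] using hxz.trans (hlow z hzy).le
    · simpa [update_of_ne hx, update_of_ne hya] using hxy

theorem range_update_id_comp {a b : P} (hab : a ≠ b) {g : P → P} (hg : Surjective g) :
    Set.range (update id a b ∘ g) = {a}ᶜ := by
  rw [hg.range_comp]
  ext x
  rcases eq_or_ne x a with rfl | hx
  · simp only [Set.mem_range, Set.mem_compl_singleton_iff, update_apply, id]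
    grind
  · simpa [hx] using ⟨x, update_of_ne hx _ _⟩

theorem update_id_eq_update_id_iff {a b u v : P} :
    update id a b u = update id a b v ↔ v = u ∨ v = Equiv.swap a b u := by
  simp only [update_apply, id, Equiv.swap_apply_def]
  grind

theorem eq_or_eq_swap_comp_of_update_id_comp_eq {a b : P} {g g' : P → P}
    (hg : Injective g) (hg' : Injective g') (h : update id a b ∘ g = update id a b ∘ g') :
    g' = g ∨ g' = Equiv.swap a b ∘ g := by
  have hpt (x : P) : g' x = g x ∨ g' x = Equiv.swap a b (g x) :=
    update_id_eq_update_id_iff.1 (congrFun h x)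
  -- `g` maps a point where `g' ≠ g` and a point where `g' ≠ swap a b ∘ g` into `{a, b}`,
  -- and then one of `g`, `g'` identifies them.
  by_contra! hne
  obtain ⟨x₁, hx₁⟩ := ne_iff.1 hne.1
  obtain ⟨x₂, hx₂⟩ := ne_iff.1 hne.2
  have h₁ := (hpt x₁).resolve_left hx₁
  have h₂ := (hpt x₂).resolve_right hx₂
  simp only [comp_apply, Equiv.swap_apply_def] at h₁ h₂ hx₁ hx₂
  grind [hg.eq_iff, hg'.eq_iff]

end Shift

theorem card_filter_update_comp_eq_le_two {P : Type*} [DecidableEq P] [DecidableEq (P → P)]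
    (s : Finset P) (A : Finset (P → P)) (b : P → P) (hb : ∀ a ∈ s, a ≠ b a)
    (hA : ∀ g ∈ A, Bijective g) (h : P → P) :
    #{p ∈ s ×ˢ A | update id p.1 (b p.1) ∘ p.2 = h} ≤ 2 := by
  set fiber := {p ∈ s ×ˢ A | update id p.1 (b p.1) ∘ p.2 = h}
  rcases fiber.eq_empty_or_nonempty with hempty | ⟨⟨a₀, g₀⟩, hp₀⟩
  · simp [hempty]
  refine (card_le_card (t := {(a₀, g₀), (a₀, Equiv.swap a₀ (b a₀) ∘ g₀)}) ?_).trans card_le_two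
  rintro ⟨a, g⟩ hp
  simp only [fiber, mem_filter, mem_product] at hp hp₀
  obtain ⟨⟨ha, hg⟩, rfl⟩ := hp
  obtain ⟨⟨ha₀, hg₀⟩, hh⟩ := hp₀
  have hcompl : ({a₀}ᶜ : Set P) = {a}ᶜ := by
    rw [← range_update_id_comp (hb a₀ ha₀) (hA g₀ hg₀).2,
      ← range_update_id_comp (hb a ha) (hA g hg).2, hh]
  obtain rfl : a₀ = a := by simpa using hcompl
  rcases eq_or_eq_swap_comp_of_update_id_comp_eq (hA g₀ hg₀).1 (hA g hg).1 hh with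
    rfl | rfl <;> simp

/-- If a finite poset `P` contains `k` distinct elements each having an older
sibling, then `|End(P)| ≥ (k/2) · |Aut(P)|`. -/
theorem card_end_ge_half_siblings_mul_card_aut
    (P : Type*) [PartialOrder P] [Fintype P] (k : ℕ) (s : Finset P)
    (hcard : s.card = k)
    (hsib : ∀ a ∈ s, ∃ b : P, a ≠ b ∧ ¬ a ≤ b ∧ ¬ b ≤ a ∧
      (∀ z : P, z ⋖ a → z ⋖ b) ∧ (∀ z : P, a ⋖ z → b ⋖ z)) :
    k * Nat.card {f : P → P // Monotone f ∧ Function.Bijective f}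
      ≤ 2 * Nat.card {f : P → P // Monotone f} := by
  classical
  choose! b hab _ _ hlow hup using hsib
  set Aut : Finset (P → P) := {f | Monotone f ∧ Bijective f}
  set End : Finset (P → P) := {f | Monotone f}
  have hmaps : ∀ p ∈ s ×ˢ Aut, update id p.1 (b p.1) ∘ p.2 ∈ End := by
    simp only [Aut, End, mem_product, mem_filter, mem_univ, true_and]
    exact fun p hp => (monotone_update_id_of_covBy (hlow _ hp.1) (hup _ hp.1)).comp hp.2.1
  have hcount := card_le_mul_card_image_of_maps_to hmaps 2 fun h _ =>
    card_filter_update_comp_eq_le_two s Aut b hab (fun g hg => (mem_filter.1 hg).2.2) h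
  rw [card_product, hcard] at hcount
  simpa only [Nat.card_eq_fintype_card, Fintype.card_subtype] using hcount
end

section
/- Let P be a finite graded poset with rank function r, and suppose every Whitney number w_i (the number of elements of rank i) is at most 3. Suppose no element of P is up-single or down-single except possibly elements of minimal or maximal rank (i.e., every non-maximal element is covered by at least two elements and every non-minimal element covers at least two elements). Then for any s, t ∈ P with r(t) = r(s) + 2, s < t. -/
/-! The upper covers of `s` and the lower covers of `t` all have rank `r(s) + 1`. There are at
least two of each but at most three elements of that rank, so some `y` satisfies `s ⋖ y ⋖ t`. -/

theorem lt_of_card_lt_card_covBy_add_card_covBy {P : Type*} [PartialOrder P] [Finite P]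
    {s t : P} (p : P → Prop) (hup : ∀ y, s ⋖ y → p y) (hdown : ∀ y, y ⋖ t → p y)
    (hcard : Nat.card {y // p y} < Nat.card {y // s ⋖ y} + Nat.card {y // y ⋖ t}) :
    s < t := by
  classical
  have := Fintype.ofFinite P
  simp only [Nat.card_eq_fintype_card, Fintype.card_subtype] at hcard
  obtain ⟨y, hy⟩ := Finset.inter_nonempty_of_card_lt_card_add_card
    (Finset.monotone_filter_right _ fun y _ => hup y)
    (Finset.monotone_filter_right _ fun y _ => hdown y) hcard
  simp only [Finset.mem_inter, Finset.mem_filter, Finset.mem_univ, true_and] at hy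
  exact hy.1.lt.trans hy.2.lt

theorem whidth_three_two_ranks_apart_comparable_general
    (P : Type*) [PartialOrder P] [Fintype P] (rk : P → ℕ) (n : ℕ)
    (hcov : ∀ x y : P, x ⋖ y → rk y = rk x + 1)
    (hle : ∀ x : P, rk x ≤ n)
    (hwhitney : ∀ i : ℕ, Nat.card {x : P // rk x = i} ≤ 3)
    (hup2 : ∀ x : P, rk x < n → 2 ≤ Nat.card {y : P // x ⋖ y})
    (hdown2 : ∀ x : P, 0 < rk x → 2 ≤ Nat.card {y : P // y ⋖ x})
    (s t : P) (hst : rk t = rk s + 2) :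
    s < t := by
  have hs_up := hup2 s (by have := hle t; omega)
  have ht_down := hdown2 t (by omega)
  have hlevel := hwhitney (rk s + 1)
  exact lt_of_card_lt_card_covBy_add_card_covBy (fun y => rk y = rk s + 1)
    (fun y hy => hcov s y hy) (fun y hy => by have := hcov y t hy; omega) (by omega)

/-- In a finite graded poset with all Whitney numbers at most 3, in which every
element of non-maximal rank is covered by at least two elements and every element
of non-minimal rank covers at least two elements, any two elements `s, t` with
`r(t) = r(s) + 2` satisfy `s < t`. -/
theorem whidth_three_two_ranks_apart_comparable
    (P : Type*) [PartialOrder P] [Fintype P] (rk : P → ℕ) (n : ℕ)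
    (hcov : ∀ x y : P, x ⋖ y → rk y = rk x + 1)
    (hmin : ∀ x : P, (∀ y : P, ¬ y < x) → rk x = 0)
    (hle : ∀ x : P, rk x ≤ n)
    (hwhitney : ∀ i : ℕ, Nat.card {x : P // rk x = i} ≤ 3)
    (hup2 : ∀ x : P, rk x < n → 2 ≤ Nat.card {y : P // x ⋖ y})
    (hdown2 : ∀ x : P, 0 < rk x → 2 ≤ Nat.card {y : P // y ⋖ x})
    (s t : P) (hst : rk t = rk s + 2) :
    s < t :=
  whidth_three_two_ranks_apart_comparable_general P rk n hcov hle hwhitney hup2 hdown2 s t hst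
end

section
/- Let P be a finite graded poset with every Whitney number at most 4, and suppose every element of non-minimal rank covers at least two elements. If x ∈ P is smaller than at least three elements of rank r, then x is smaller than every element of rank r + 1. -/
/-! The element `y` covers two distinct elements of rank `r`. Were both different from
`a`, `b`, `c`, rank `r` would contain five elements, so one of them lies above `x`. -/

open Finset

theorem Finset.mem_or_mem_of_card_le_card_add_one {α : Type*} [DecidableEq α] {s t : Finset α}
    (hts : t ⊆ s) (hcard : #s ≤ #t + 1) {u v : α} (hu : u ∈ s) (hv : v ∈ s) (huv : u ≠ v) :
    u ∈ t ∨ v ∈ t := by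
  by_contra! h
  have hsub : insert u (insert v t) ⊆ s := insert_subset hu (insert_subset hv hts)
  have hcard' : #(insert u (insert v t)) = #t + 2 := by
    rw [card_insert_of_notMem (by simp [huv, h.1]), card_insert_of_notMem h.2]
  have := card_le_card hsub
  omega

theorem exists_ne_covBy_of_two_le_card {P : Type*} [Preorder P] {y : P}
    (h : 2 ≤ Nat.card {z : P // z ⋖ y}) : ∃ z₁ z₂, z₁ ⋖ y ∧ z₂ ⋖ y ∧ z₁ ≠ z₂ := by
  have : Finite {z : P // z ⋖ y} := Nat.finite_of_card_ne_zero (by omega)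
  have : Nontrivial {z : P // z ⋖ y} := Finite.one_lt_card_iff_nontrivial.1 h
  obtain ⟨⟨z₁, h₁⟩, ⟨z₂, h₂⟩, hne⟩ := exists_pair_ne {z : P // z ⋖ y}
  exact ⟨z₁, z₂, h₁, h₂, fun h => hne (Subtype.ext h)⟩

theorem whidth_four_above_three_implies_above_all_general
    (P : Type*) [PartialOrder P] [Fintype P] (rk : P → ℕ)
    (hcov : ∀ x y : P, x ⋖ y → rk y = rk x + 1)
    (hwhitney : ∀ i : ℕ, Nat.card {x : P // rk x = i} ≤ 4)
    (hdown2 : ∀ y : P, rk y ≠ 0 → 2 ≤ Nat.card {z : P // z ⋖ y})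
    (x : P) (r : ℕ) (a b c : P)
    (ha : rk a = r) (hb : rk b = r) (hc : rk c = r)
    (hab : a ≠ b) (hac : a ≠ c) (hbc : b ≠ c)
    (hxa : x < a) (hxb : x < b) (hxc : x < c) :
    ∀ y : P, rk y = r + 1 → x < y := by
  classical
  intro y hy
  set level := univ.filter (fun t => rk t = r)
  have hlevel : #level ≤ #{a, b, c} + 1 := by
    rw [card_eq_three.2 ⟨a, b, c, hab, hac, hbc, rfl⟩, ← Fintype.card_subtype,
      ← Nat.card_eq_fintype_card]
    exact hwhitney r
  have habc : {a, b, c} ⊆ level := by simp [insert_subset_iff, level, ha, hb, hc]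
  have hx : ∀ t ∈ ({a, b, c} : Finset P), x < t := by simp [hxa, hxb, hxc]
  have hcovers : ∀ z, z ⋖ y → z ∈ level := fun z hz => by
    simpa [level] using (by have := hcov z y hz; omega : rk z = r)
  obtain ⟨z₁, z₂, h₁, h₂, hne⟩ := exists_ne_covBy_of_two_le_card (hdown2 y (by omega))
  obtain h | h := mem_or_mem_of_card_le_card_add_one habc hlevel (hcovers z₁ h₁)
    (hcovers z₂ h₂) hne
  · exact (hx z₁ h).trans h₁.lt
  · exact (hx z₂ h).trans h₂.lt

/-- In a finite graded poset with all Whitney numbers at most 4 in which every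
element of nonzero rank covers at least two elements, if `x` is smaller than at
least three elements of rank `r`, then `x` is smaller than every element of
rank `r + 1`. -/
theorem whidth_four_above_three_implies_above_all
    (P : Type*) [PartialOrder P] [Fintype P] (rk : P → ℕ)
    (hcov : ∀ x y : P, x ⋖ y → rk y = rk x + 1)
    (hmin : ∀ x : P, (∀ y : P, ¬ y < x) → rk x = 0)
    (hwhitney : ∀ i : ℕ, Nat.card {x : P // rk x = i} ≤ 4)
    (hdown2 : ∀ y : P, rk y ≠ 0 → 2 ≤ Nat.card {z : P // z ⋖ y})
    (x : P) (r : ℕ) (a b c : P)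
    (ha : rk a = r) (hb : rk b = r) (hc : rk c = r)
    (hab : a ≠ b) (hac : a ≠ c) (hbc : b ≠ c)
    (hxa : x < a) (hxb : x < b) (hxc : x < c) :
    ∀ y : P, rk y = r + 1 → x < y :=
  whidth_four_above_three_implies_above_all_general P rk hcov hwhitney hdown2 x r a b c ha hb hc hab
    hac hbc hxa hxb hxc
end

section
/- Let P be a finite graded poset and suppose x ∈ P is a central element for parameters r_1, r_2: a < x for every a with r(x) − r(a) = r_1 and x < b for every b with r(b) − r(x) = r_2. Let I be the set of elements z with r(x) − r_1 < r(z) < r(x) + r_2 (the interior). Then the map F_x sending every element of I to x and fixing all other elements is an endomorphism of P. -/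
/-! A rank function that adds one along covers is strictly monotone, and along any `z ≤ w` it
takes every value between `rk z` and `rk w` (climb from `z` by covers inside `[z, w]`). So if
`z ≤ w` and exactly one of them lies in the interior, the interval `[z, w]` meets rank
`rk x - r₁` (then `z ≤ a < x`) or rank `rk x + r₂` (then `x < b ≤ w`). -/

section GradedRank

variable {P : Type*} [PartialOrder P] {rk : P → ℕ}

theorem strictMono_of_forall_covBy_rank_succ [LocallyFiniteOrder P]
    (hcov : ∀ x y : P, x ⋖ y → rk y = rk x + 1) : StrictMono rk :=
  (strictMono_iff_forall_covBy rk).2 fun a b hab => by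
    rw [hcov a b hab]
    exact Nat.lt_succ_self _

theorem exists_rank_eq_of_le [IsStronglyAtomic P]
    (hcov : ∀ x y : P, x ⋖ y → rk y = rk x + 1) {z w : P} (hzw : z ≤ w) {k : ℕ}
    (hzk : rk z ≤ k) (hkw : k ≤ rk w) : ∃ c, z ≤ c ∧ c ≤ w ∧ rk c = k := by
  obtain ⟨n, rfl⟩ := Nat.exists_eq_add_of_le hzk
  induction n generalizing z with
  | zero => exact ⟨z, le_rfl, hzw, rfl⟩
  | succ n ih =>
    have hlt : z < w := hzw.lt_of_ne (by rintro rfl; omega)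
    obtain ⟨c, hzc, hcw⟩ := exists_covBy_le_of_lt hlt
    have hc : rk c = rk z + 1 := hcov z c hzc
    obtain ⟨d, hcd, hdw, hd⟩ := ih hcw (by omega) (by omega)
    exact ⟨d, hzc.le.trans hcd, hdw, by omega⟩

end GradedRank

theorem central_element_contraction_monotone_general
    (P : Type*) [PartialOrder P] [Fintype P] (rk : P → ℕ)
    (hcov : ∀ x y : P, x ⋖ y → rk y = rk x + 1)
    (x : P) (r₁ r₂ : ℕ)
    (hbelow : ∀ a : P, rk a = rk x - r₁ → a < x)
    (habove : ∀ b : P, rk b = rk x + r₂ → x < b) :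
    Monotone (fun z : P =>
      if rk x - r₁ < rk z ∧ rk z < rk x + r₂ then x else z) := by
  classical
  have : LocallyFiniteOrder P := Fintype.toLocallyFiniteOrder
  intro z w hzw
  have hrk : rk z ≤ rk w := (strictMono_of_forall_covBy_rank_succ hcov).monotone hzw
  dsimp only
  split_ifs with hz hw hw
  · exact le_rfl
  · obtain ⟨b, -, hbw, hb⟩ := exists_rank_eq_of_le hcov hzw (k := rk x + r₂) (by omega) (by omega)
    exact (habove b hb).le.trans hbw
  · obtain ⟨a, hza, -, ha⟩ := exists_rank_eq_of_le hcov hzw (k := rk x - r₁) (by omega) (by omega)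
    exact hza.trans (hbelow a ha).le
  · exact hzw

/-- If `x` is a central element of a finite graded poset `P` for parameters
`r₁, r₂` (above everything `r₁` ranks below it and below everything `r₂` ranks
above it), then contracting the interior (elements of strictly intermediate
rank) to `x` and fixing everything else is an endomorphism of `P`. -/
theorem central_element_contraction_monotone
    (P : Type*) [PartialOrder P] [Fintype P] (rk : P → ℕ)
    (hcov : ∀ x y : P, x ⋖ y → rk y = rk x + 1)
    (hmin : ∀ x : P, (∀ y : P, ¬ y < x) → rk x = 0)
    (x : P) (r₁ r₂ : ℕ) (hr₁ : 0 < r₁) (hr₂ : 0 < r₂) (hr₁x : r₁ ≤ rk x)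
    (hbelow : ∀ a : P, rk a = rk x - r₁ → a < x)
    (habove : ∀ b : P, rk b = rk x + r₂ → x < b)
    (hne₁ : ∃ a : P, rk a = rk x - r₁) (hne₂ : ∃ b : P, rk b = rk x + r₂) :
    Monotone (fun z : P =>
      if rk x - r₁ < rk z ∧ rk z < rk x + r₂ then x else z) :=
  central_element_contraction_monotone_general P rk hcov x r₁ r₂ hbelow habove
end

section
/- Let P be a finite poset with a minimum element 0 and at least three elements. Then |Aut(P)| / |End(P)| ≤ 1/3. -/
/-!
Collapsing a point `p` onto `q ≠ p` by `update id p q`, when this map is monotone, and composing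
with automorphisms gives monotone maps with range exactly `{p}ᶜ`; this is injective as long as
every automorphism fixes `q`. Two collapses with different `p`, together with the automorphisms
themselves, therefore give three disjoint copies of `Aut(P)` inside `End(P)`. If `0` is covered by
two atoms `a ≠ a'`, collapse both onto `0`. If `a` is the only atom, collapse `a` onto `0` and an
element covering `a` onto `a`; `a`, being the least element of `P ∖ {0}`, is fixed by every
automorphism.
-/

open Function

section Collapse

variable {α : Type*} [DecidableEq α] {p q : α}

theorem range_update_id_s12 (h : p ≠ q) : Set.range (update id p q) = {p}ᶜ := by
  ext x
  simp only [Set.mem_range, Set.mem_compl_singleton_iff, update_apply, id_eq]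
  constructor
  · rintro ⟨y, rfl⟩
    split_ifs <;> grind
  · intro hx
    exact ⟨x, if_neg hx⟩

theorem injOn_update_id : Set.InjOn (update id p q) {q}ᶜ := by
  intro x hx y hy hxy
  simp only [Set.mem_compl_singleton_iff] at hx hy
  simp only [update_apply, id_eq] at hxy
  split_ifs at hxy <;> grind

theorem update_id_comp_injective {σ τ : α → α} (hσ : Injective σ) (hτ : Injective τ)
    (hσq : σ q = q) (hτq : τ q = q) (h : update id p q ∘ σ = update id p q ∘ τ) : σ = τ := by
  funext x
  rcases eq_or_ne x q with rfl | hx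
  · rw [hσq, hτq]
  · exact injOn_update_id (hσ.ne_iff' hσq |>.mpr hx) (hτ.ne_iff' hτq |>.mpr hx) (congrFun h x)

end Collapse

section Order

variable {P : Type*} [PartialOrder P] [DecidableEq P]

theorem monotone_update_id_s12 {p q : P} (hqp : q ≤ p) (hlt : ∀ x < p, x ≤ q) :
    Monotone (update id p q) := by
  intro x y hxy
  simp only [update_apply, id_eq]
  split_ifs with hx hy hy
  · exact le_rfl
  · exact hqp.trans (hx ▸ hxy)
  · exact hlt x (lt_of_le_of_ne (hy ▸ hxy) hx)
  · exact hxy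

variable [Finite P]

theorem three_mul_card_aut_le_card_end {p₁ q₁ p₂ q₂ : P} (hp : p₁ ≠ p₂) (h₁ : p₁ ≠ q₁)
    (h₂ : p₂ ≠ q₂) (hm₁ : Monotone (update id p₁ q₁)) (hm₂ : Monotone (update id p₂ q₂))
    (hfix₁ : ∀ f : P → P, Monotone f → Bijective f → f q₁ = q₁)
    (hfix₂ : ∀ f : P → P, Monotone f → Bijective f → f q₂ = q₂) :
    3 * Nat.card {f : P → P // Monotone f ∧ Bijective f} ≤ Nat.card {f : P → P // Monotone f} := by
  set Aut := {f : P → P // Monotone f ∧ Bijective f}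
  let incl : Aut → {f : P → P // Monotone f} := fun σ ↦ ⟨σ.1, σ.2.1⟩
  let collapse (p q : P) (hm : Monotone (update id p q)) : Aut → {f : P → P // Monotone f} :=
    fun σ ↦ ⟨update id p q ∘ σ.1, hm.comp σ.2.1⟩
  have range_incl (σ : Aut) : Set.range (incl σ).1 = Set.univ := σ.2.2.2.range_eq
  have range_collapse {p q : P} (h : p ≠ q) {hm} (σ : Aut) :
      Set.range (collapse p q hm σ).1 = {p}ᶜ := by
    rw [σ.2.2.2.range_comp, range_update_id_s12 h]
  have collapse_injective {p q : P} (hm) (hfix : ∀ f : P → P, Monotone f → Bijective f → f q = q) :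
      Injective (collapse p q hm) := fun σ τ h ↦ Subtype.ext <|
    update_id_comp_injective σ.2.2.1 τ.2.2.1 (hfix _ σ.2.1 σ.2.2) (hfix _ τ.2.1 τ.2.2)
      (congrArg Subtype.val h)
  have ne_of_range_ne {f g : {f : P → P // Monotone f}} (h : Set.range f.1 ≠ Set.range g.1) :
      f ≠ g := fun hfg ↦ h (hfg ▸ rfl)
  have incl_injective : Injective incl := fun σ τ h ↦ Subtype.ext (congrArg Subtype.val h :)
  have hinj : Injective (Sum.elim incl (Sum.elim (collapse p₁ q₁ hm₁) (collapse p₂ q₂ hm₂))) := by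
    refine incl_injective.sumElim
      ((collapse_injective hm₁ hfix₁).sumElim (collapse_injective hm₂ hfix₂) ?_) ?_
    · exact fun σ τ ↦ ne_of_range_ne <| by
        simp [range_collapse h₁, range_collapse h₂, hp]
    · rintro σ (τ | τ) <;> refine ne_of_range_ne ?_ <;>
        simp [range_incl, range_collapse h₁, range_collapse h₂, Set.ext_iff]
  have := Nat.card_le_card_of_injective _ hinj
  rw [Nat.card_sum, Nat.card_sum] at this
  omega

end Order

section OrderBot

variable {P : Type*} [PartialOrder P] [OrderBot P] {f : P → P}

theorem Monotone.map_bot_of_surjective (hf : Monotone f) (hs : Surjective f) : f ⊥ = ⊥ := by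
  obtain ⟨x, hx⟩ := hs ⊥
  exact le_bot_iff.mp ((hf bot_le).trans_eq hx)

theorem Monotone.map_eq_self_of_isLeast_ne_bot {a : P} (ha : IsLeast {x | x ≠ ⊥} a)
    (hf : Monotone f) (hbij : Bijective f) : f a = a := by
  have hf_bot := hf.map_bot_of_surjective hbij.2
  obtain ⟨y, hy⟩ := hbij.2 a
  have hy_ne : y ≠ ⊥ := by
    rintro rfl
    exact ha.1 (hy ▸ hf_bot)
  refine le_antisymm ((hf (ha.2 hy_ne)).trans_eq hy) (ha.2 ?_)
  exact (hbij.1.ne_iff' hf_bot).mpr ha.1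

variable [DecidableEq P] {a c : P}

theorem IsAtom.monotone_update_id (ha : IsAtom a) : Monotone (update id a ⊥) :=
  _root_.monotone_update_id_s12 bot_le fun _ hx ↦ (ha.lt_iff.mp hx).le

theorem CovBy.monotone_update_id (ha : IsLeast {x | x ≠ ⊥} a) (hac : a ⋖ c) :
    Monotone (update id c a) := by
  refine _root_.monotone_update_id_s12 hac.le fun x hxc ↦ ?_
  rcases eq_or_ne x ⊥ with rfl | hx
  · exact bot_le
  · exact (ha.2 hx).eq_or_lt.elim (fun h ↦ h.ge) fun hax ↦ (hac.2 hax hxc).elim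

end OrderBot

/-- For a finite poset `P` with a minimum element and at least three elements,
`|Aut(P)| / |End(P)| ≤ 1/3`. -/
theorem aut_le_third_end_of_bot
    (P : Type*) [PartialOrder P] [Fintype P]
    (b : P) (hb : ∀ x : P, b ≤ x) (h3 : 3 ≤ Fintype.card P) :
    3 * Nat.card {f : P → P // Monotone f ∧ Function.Bijective f}
      ≤ Nat.card {f : P → P // Monotone f} := by
  classical
  let : OrderBot P := { bot := b, bot_le := hb }
  have fix_bot (f : P → P) (hf : Monotone f) (hbij : Bijective f) : f ⊥ = ⊥ :=
    hf.map_bot_of_surjective hbij.2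
  have : Nontrivial P := Fintype.one_lt_card_iff_nontrivial.mp (by omega)
  obtain ⟨a, ha⟩ := IsAtomic.exists_atom (α := P)
  by_cases huniq : ∀ x ≠ ⊥, a ≤ x
  · have ha_least : IsLeast {x | x ≠ ⊥} a := ⟨ha.ne_bot, huniq⟩
    obtain ⟨c, -, hc⟩ := Finset.exists_mem_notMem_of_card_lt_card
      (s := {⊥, a}) (t := Finset.univ) (by grind [Finset.card_le_two, Finset.card_univ])
    obtain ⟨c, hac, -⟩ := exists_covBy_le_of_lt <|
      (huniq c (by grind)).lt_of_ne (by grind)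
    exact three_mul_card_aut_le_card_end hac.lt.ne ha.ne_bot hac.lt.ne' ha.monotone_update_id
      (hac.monotone_update_id ha_least) fix_bot
      fun f hf hbij ↦ hf.map_eq_self_of_isLeast_ne_bot ha_least hbij
  · push Not at huniq
    obtain ⟨x, hx, hax⟩ := huniq
    obtain ⟨a', ha', ha'x⟩ := (eq_bot_or_exists_atom_le x).resolve_left hx
    exact three_mul_card_aut_le_card_end (p₁ := a) (p₂ := a') (fun h ↦ hax (h ▸ ha'x))
      ha.ne_bot ha'.ne_bot ha.monotone_update_id ha'.monotone_update_id fix_bot fix_bot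
end
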